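/- For every θ ∈ Θ with |θ| ≤ ν₀/(2 L_a) one has V_θ ⊆ ℳ_θ V₀; more precisely, v_θ = ℳ_θ P_{V₀} v_θ for every v_θ ∈ V_θ, where P_{V₀} denotes the orthogonal projection of H onto V₀ with respect to (·,·)₀. -/

import Mathlib

noncomputable section

open scoped Classical

/-- An abstract family of non-negative bounded sesquilinear forms `a θ`, `b θ`
(linear in the first argument, conjugate-linear in the second) on a complex Hilbert
space `H`, parametrised by `θ` in a compact subset `Θ` of `ℝⁿ`, such that
`(·,·)_θ := a θ + b θ` is a family of inner products whose norms are equivalent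
to the norm of `H`. -/
structure FormFamily (n : ℕ) (H : Type*) [NormedAddCommGroup H] [InnerProductSpace ℂ H]
    [CompleteSpace H] where
  Θ : Set (EuclideanSpace ℝ (Fin n))
  compactΘ : IsCompact Θ
  a : EuclideanSpace ℝ (Fin n) → H → H → ℂ
  b : EuclideanSpace ℝ (Fin n) → H → H → ℂ
  a_addL : ∀ θ ∈ Θ, ∀ u v w : H, a θ (u + v) w = a θ u w + a θ v w
  a_smulL : ∀ θ ∈ Θ, ∀ (c : ℂ) (u w : H), a θ (c • u) w = c * a θ u w
  a_addR : ∀ θ ∈ Θ, ∀ u v w : H, a θ u (v + w) = a θ u v + a θ u w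
  a_smulR : ∀ θ ∈ Θ, ∀ (c : ℂ) (u w : H), a θ u (c • w) = starRingEnd ℂ c * a θ u w
  a_nonneg : ∀ θ ∈ Θ, ∀ u : H, 0 ≤ (a θ u u).re
  a_im : ∀ θ ∈ Θ, ∀ u : H, (a θ u u).im = 0
  a_bdd : ∀ θ ∈ Θ, ∃ C : ℝ, ∀ u w : H, ‖a θ u w‖ ≤ C * ‖u‖ * ‖w‖
  b_addL : ∀ θ ∈ Θ, ∀ u v w : H, b θ (u + v) w = b θ u w + b θ v w
  b_smulL : ∀ θ ∈ Θ, ∀ (c : ℂ) (u w : H), b θ (c • u) w = c * b θ u w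
  b_addR : ∀ θ ∈ Θ, ∀ u v w : H, b θ u (v + w) = b θ u v + b θ u w
  b_smulR : ∀ θ ∈ Θ, ∀ (c : ℂ) (u w : H), b θ u (c • w) = starRingEnd ℂ c * b θ u w
  b_nonneg : ∀ θ ∈ Θ, ∀ u : H, 0 ≤ (b θ u u).re
  b_im : ∀ θ ∈ Θ, ∀ u : H, (b θ u u).im = 0
  b_bdd : ∀ θ ∈ Θ, ∃ C : ℝ, ∀ u w : H, ‖b θ u w‖ ≤ C * ‖u‖ * ‖w‖
  equivNorm : ∀ θ ∈ Θ, ∃ c₁ c₂ : ℝ, 0 < c₁ ∧ ∀ u : H,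
    c₁ * ‖u‖ ^ 2 ≤ (a θ u u).re + (b θ u u).re ∧
      (a θ u u).re + (b θ u u).re ≤ c₂ * ‖u‖ ^ 2

namespace FormFamily

variable {n : ℕ} {H : Type*} [NormedAddCommGroup H] [InnerProductSpace ℂ H] [CompleteSpace H]

/-- The inner product `(u, w)_θ := a θ u w + b θ u w`. -/
def ip (S : FormFamily n H) (θ : EuclideanSpace ℝ (Fin n)) (u w : H) : ℂ :=
  S.a θ u w + S.b θ u w

/-- The squared `θ`-norm `‖u‖_θ ^ 2 = (u, u)_θ`. -/
def nsq (S : FormFamily n H) (θ : EuclideanSpace ℝ (Fin n)) (u : H) : ℝ :=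
  (S.ip θ u u).re

/-- The `θ`-norm `‖u‖_θ`. -/
def nrm (S : FormFamily n H) (θ : EuclideanSpace ℝ (Fin n)) (u : H) : ℝ :=
  Real.sqrt (S.nsq θ u)

/-- The degeneracy subspace `V_θ = {v : a_θ[v] = 0}`. -/
def V (S : FormFamily n H) (θ : EuclideanSpace ℝ (Fin n)) : Set H :=
  {v : H | S.a θ v v = 0}

/-- `W_θ`, the orthogonal complement of `V_θ` in `H` with respect to `(·,·)_θ`. -/
def W (S : FormFamily n H) (θ : EuclideanSpace ℝ (Fin n)) : Set H :=
  {w : H | ∀ v ∈ S.V θ, S.ip θ w v = 0}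

end FormFamily

/-- `f : H → ℂ` is a bounded conjugate-linear functional. -/
def IsBddConjLinear {H : Type*} [NormedAddCommGroup H] [InnerProductSpace ℂ H]
    (f : H → ℂ) : Prop :=
  (∀ u v : H, f (u + v) = f u + f v) ∧
    (∀ (c : ℂ) (u : H), f (c • u) = starRingEnd ℂ c * f u) ∧
    ∃ C : ℝ, ∀ u : H, ‖f u‖ ≤ C * ‖u‖

/-- The homogenised form `a^h_θ(v,vt) = a''₀(v,vt)θ·θ - a₀(N_θ v, N_θ vt)`. -/
def ahom {n : ℕ} {H : Type*} [NormedAddCommGroup H] [InnerProductSpace ℂ H] [CompleteSpace H]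
    (S : FormFamily n H) (a'' : H → H → Fin n → Fin n → ℂ)
    (N : EuclideanSpace ℝ (Fin n) → H → H) (θ : EuclideanSpace ℝ (Fin n)) (v vt : H) : ℂ :=
  (∑ j, ∑ k, a'' v vt j k * (θ j : ℂ) * (θ k : ℂ)) - S.a 0 (N θ v) (N θ vt)


/-!
Given `v ∈ V_θ`, let `p` be its `(·,·)₀`-projection onto `V₀` and put `u := v - p - 𝒩_θ p`.
Then `u ∈ W₀`, and since `a_θ(v, ·) = 0` (a vector on which a nonnegative Hermitian form
vanishes lies in its kernel, by Cauchy–Schwarz) the corrector equation gives `a_θ[u] = 0`.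
The gap at `θ = 0` and the Lipschitz bound then give
`ν₀ ‖u‖₀² ≤ a₀[u] = |a₀[u] - a_θ[u]| ≤ L_a |θ| ‖u‖₀² ≤ ν₀/2 ‖u‖₀²`, so `u = 0`.
The projection exists because `(·,·)₀` makes `H` a Hilbert space in which `V₀` is closed.
-/

namespace LinearMap

section Module

variable {E : Type*} [AddCommGroup E] [Module ℂ E] (B : E →ₗ[ℂ] E →ₗ⋆[ℂ] ℂ)

theorem conj_apply_of_im_apply_self_eq_zero (hB : ∀ u, (B u u).im = 0) (u w : E) :
    starRingEnd ℂ (B u w) = B w u := by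
  have h₁ := hB (u + w)
  have h₂ := hB (u + Complex.I • w)
  simp only [map_add, map_smul, map_smulₛₗ, add_apply, smul_apply, smul_eq_mul, Complex.conj_I,
    Complex.add_im, Complex.mul_im, Complex.add_re, Complex.mul_re, Complex.neg_re,
    Complex.neg_im, Complex.I_re, Complex.I_im, hB u, hB w] at h₁ h₂
  apply Complex.ext <;> simp only [Complex.conj_re, Complex.conj_im] <;> linarith

/-- The arguments are swapped because Mathlib's inner products are conjugate linear in the first
slot. -/
abbrev toPreInnerProductSpaceCore (hB_im : ∀ u, (B u u).im = 0) (hB_re : ∀ u, 0 ≤ (B u u).re) :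
    PreInnerProductSpace.Core ℂ E where
  inner x y := B y x
  conj_inner_symm x y := B.conj_apply_of_im_apply_self_eq_zero hB_im x y
  re_inner_nonneg x := hB_re x
  add_left x y z := map_add (B z) x y
  smul_left x y r := map_smulₛₗ (B y) r x

theorem apply_eq_zero_of_apply_self_eq_zero (hB_im : ∀ u, (B u u).im = 0)
    (hB_re : ∀ u, 0 ≤ (B u u).re) {v : E} (hv : B v v = 0) (w : E) : B v w = 0 := by
  let := B.toPreInnerProductSpaceCore hB_im hB_re
  have h := InnerProductSpace.Core.inner_mul_inner_self_le (𝕜 := ℂ) w v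
  change ‖B v w‖ * ‖B w v‖ ≤ (B w w).re * (B v v).re at h
  rw [hv, Complex.zero_re, mul_zero, ← B.conj_apply_of_im_apply_self_eq_zero hB_im v w,
    Complex.norm_conj] at h
  exact norm_eq_zero.1 (mul_self_eq_zero.1 (le_antisymm h (mul_self_nonneg _)))

/-- A copy of `E`, to be equipped with the inner product `⟪x, y⟫ := B y x`. -/
def FormSpace (_B : E →ₗ[ℂ] E →ₗ⋆[ℂ] ℂ) : Type _ := E

instance : AddCommGroup B.FormSpace := inferInstanceAs (AddCommGroup E)

instance : Module ℂ B.FormSpace := inferInstanceAs (Module ℂ E)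

def toFormSpace : E ≃ₗ[ℂ] B.FormSpace := LinearEquiv.refl ℂ E

end Module

section Normed

variable {E : Type*} [NormedAddCommGroup E] [NormedSpace ℂ E] (B : E →ₗ[ℂ] E →ₗ⋆[ℂ] ℂ)

theorem isClosed_ker_of_bound {C : ℝ} (hC : ∀ u w, ‖B u w‖ ≤ C * ‖u‖ * ‖w‖) :
    IsClosed (ker B : Set E) := by
  have hker : (ker B : Set E) = ⋂ w, {v | B.flip w v = 0} := by
    ext v
    simp [LinearMap.ext_iff]
  rw [hker]
  refine isClosed_iInter fun w => isClosed_eq ?_ continuous_const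
  exact AddMonoidHomClass.continuous_of_bound (B.flip w) (C * ‖w‖) fun v =>
    (hC v w).trans_eq (by ring)

theorem eq_zero_of_re_apply_self_nonpos {c₁ : ℝ} (hc₁ : 0 < c₁)
    (hB : ∀ u, c₁ * ‖u‖ ^ 2 ≤ (B u u).re) {u : E} (hu : (B u u).re ≤ 0) : u = 0 :=
  norm_eq_zero.1 <| pow_eq_zero_iff two_ne_zero |>.1 <|
    le_antisymm (nonpos_of_mul_nonpos_right ((hB u).trans hu) hc₁) (sq_nonneg _)

theorem exists_sub_apply_eq_zero_of_bounds [CompleteSpace E] (hB_im : ∀ u, (B u u).im = 0)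
    {c₁ c₂ : ℝ} (hc₁ : 0 < c₁)
    (hB : ∀ u, c₁ * ‖u‖ ^ 2 ≤ (B u u).re ∧ (B u u).re ≤ c₂ * ‖u‖ ^ 2)
    {V : Submodule ℂ E} (hV : IsClosed (V : Set E)) (x : E) :
    ∃ p ∈ V, ∀ v ∈ V, B (x - p) v = 0 := by
  have hB_re : ∀ u, 0 ≤ (B u u).re := fun u => by nlinarith [hB u, sq_nonneg ‖u‖]
  let core : InnerProductSpace.Core ℂ B.FormSpace :=
    { B.toPreInnerProductSpaceCore hB_im hB_re with
      definite := fun u hu =>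
        B.eq_zero_of_re_apply_self_nonpos hc₁ (fun u => (hB u).1) (u := B.toFormSpace.symm u)
          (congrArg Complex.re hu).le }
  let : NormedAddCommGroup B.FormSpace := core.toNormedAddCommGroup
  let : InnerProductSpace ℂ B.FormSpace := InnerProductSpace.ofCore core.toCore
  let e : E ≃L[ℂ] B.FormSpace :=
    B.toFormSpace.toContinuousLinearEquivOfBounds √c₂ √c₁⁻¹
      (fun u => calc √(B u u).re ≤ √(c₂ * ‖u‖ ^ 2) := Real.sqrt_le_sqrt (hB u).2
        _ = √c₂ * ‖u‖ := by rw [Real.sqrt_mul' _ (sq_nonneg _), Real.sqrt_sq (norm_nonneg _)])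
      (fun u => by
        change ‖B.toFormSpace.symm u‖ ≤ √c₁⁻¹ * √(B u u).re
        rw [← Real.sqrt_mul (inv_nonneg.2 hc₁.le)]
        exact Real.le_sqrt_of_sq_le ((le_inv_mul_iff₀ hc₁).2 (hB u).1))
  have : CompleteSpace B.FormSpace :=
    (completeSpace_congr (e := e.toLinearEquiv.toEquiv) e.isUniformEmbedding).1 ‹_›
  let K : Submodule ℂ B.FormSpace := V.map (e : E →ₗ[ℂ] B.FormSpace)
  have : CompleteSpace K := (e.isClosed_image.2 hV).completeSpace_coe
  obtain ⟨p, hp, hpx⟩ := K.starProjection_apply_mem (e x)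
  refine ⟨p, hp, fun v hv => ?_⟩
  have horth := K.sub_starProjection_mem_orthogonal (e x)
  rw [← hpx] at horth
  exact (K.mem_orthogonal _).1 horth (e v) ⟨v, hv, rfl⟩

end Normed

end LinearMap

namespace FormFamily

variable {n : ℕ} {H : Type*} [NormedAddCommGroup H] [InnerProductSpace ℂ H] [CompleteSpace H]
  (S : FormFamily n H) {θ : EuclideanSpace ℝ (Fin n)}

def aForm (hθ : θ ∈ S.Θ) : H →ₗ[ℂ] H →ₗ⋆[ℂ] ℂ :=
  LinearMap.mk₂'ₛₗ (RingHom.id ℂ) (starRingEnd ℂ) (S.a θ)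
    (S.a_addL θ hθ) (S.a_smulL θ hθ) (S.a_addR θ hθ) (S.a_smulR θ hθ)

def bForm (hθ : θ ∈ S.Θ) : H →ₗ[ℂ] H →ₗ⋆[ℂ] ℂ :=
  LinearMap.mk₂'ₛₗ (RingHom.id ℂ) (starRingEnd ℂ) (S.b θ)
    (S.b_addL θ hθ) (S.b_smulL θ hθ) (S.b_addR θ hθ) (S.b_smulR θ hθ)

def ipForm (hθ : θ ∈ S.Θ) : H →ₗ[ℂ] H →ₗ⋆[ℂ] ℂ := S.aForm hθ + S.bForm hθ

@[simp]
theorem aForm_apply (hθ : θ ∈ S.Θ) (u w : H) : S.aForm hθ u w = S.a θ u w := rfl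

@[simp]
theorem ipForm_apply (hθ : θ ∈ S.Θ) (u w : H) : S.ipForm hθ u w = S.ip θ u w := rfl

theorem ip_self_im (hθ : θ ∈ S.Θ) (u : H) : (S.ip θ u u).im = 0 := by
  simp only [ip, Complex.add_im, S.a_im θ hθ, S.b_im θ hθ, add_zero]

theorem ip_self_re_bounds (hθ : θ ∈ S.Θ) : ∃ c₁ c₂ : ℝ, 0 < c₁ ∧ ∀ u : H,
    c₁ * ‖u‖ ^ 2 ≤ (S.ip θ u u).re ∧ (S.ip θ u u).re ≤ c₂ * ‖u‖ ^ 2 := by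
  simpa only [ip, Complex.add_re] using S.equivNorm θ hθ

theorem nsq_nonneg (hθ : θ ∈ S.Θ) (u : H) : 0 ≤ S.nsq θ u :=
  add_nonneg (S.a_nonneg θ hθ u) (S.b_nonneg θ hθ u)

theorem nrm_mul_self (hθ : θ ∈ S.Θ) (u : H) : S.nrm θ u * S.nrm θ u = S.nsq θ u :=
  Real.mul_self_sqrt (S.nsq_nonneg hθ u)

theorem eq_zero_of_nsq_nonpos (hθ : θ ∈ S.Θ) {u : H} (hu : S.nsq θ u ≤ 0) : u = 0 := by
  obtain ⟨c₁, _, hc₁, hc⟩ := S.ip_self_re_bounds hθ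
  exact (S.ipForm hθ).eq_zero_of_re_apply_self_nonpos hc₁ (fun u => (hc u).1) hu

theorem a_apply_eq_zero_of_mem_V (hθ : θ ∈ S.Θ) {v : H} (hv : v ∈ S.V θ) (w : H) :
    S.a θ v w = 0 :=
  (S.aForm hθ).apply_eq_zero_of_apply_self_eq_zero (S.a_im θ hθ) (S.a_nonneg θ hθ) hv w

theorem V_eq_ker (hθ : θ ∈ S.Θ) : S.V θ = LinearMap.ker (S.aForm hθ) := by
  ext v
  refine ⟨fun hv => LinearMap.ext (S.a_apply_eq_zero_of_mem_V hθ hv), fun hv => ?_⟩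
  exact LinearMap.congr_fun hv v

theorem exists_ip_sub_eq_zero (hθ : θ ∈ S.Θ) (x : H) :
    ∃ p ∈ S.V θ, ∀ v ∈ S.V θ, S.ip θ (x - p) v = 0 := by
  obtain ⟨c₁, c₂, hc₁, hc⟩ := S.ip_self_re_bounds hθ
  obtain ⟨C, hC⟩ := S.a_bdd θ hθ
  rw [S.V_eq_ker hθ]
  exact (S.ipForm hθ).exists_sub_apply_eq_zero_of_bounds (S.ip_self_im hθ) hc₁ hc
    ((S.aForm hθ).isClosed_ker_of_bound hC) x

/-- The spectral gap of `a θ₀` on `W θ₀` survives the perturbation to `a θ`. -/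
theorem eq_zero_of_mem_W_of_a_self_eq_zero {θ₀ : EuclideanSpace ℝ (Fin n)} (hθ₀ : θ₀ ∈ S.Θ)
    {ν La : ℝ} (hgap : ∀ w ∈ S.W θ₀, ν * S.nsq θ₀ w ≤ (S.a θ₀ w w).re)
    (hLa : ∀ u, ‖S.a θ₀ u u - S.a θ u u‖ ≤ La * ‖θ₀ - θ‖ * S.nrm θ₀ u * S.nrm θ₀ u)
    (hsmall : La * ‖θ₀ - θ‖ < ν) {u : H} (huW : u ∈ S.W θ₀) (hu : S.a θ u u = 0) : u = 0 := by
  have hbound : (S.a θ₀ u u).re ≤ La * ‖θ₀ - θ‖ * S.nsq θ₀ u :=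
    calc (S.a θ₀ u u).re ≤ ‖S.a θ₀ u u - S.a θ u u‖ := by
          rw [hu, sub_zero]; exact Complex.re_le_norm _
      _ ≤ La * ‖θ₀ - θ‖ * S.nrm θ₀ u * S.nrm θ₀ u := hLa u
      _ = La * ‖θ₀ - θ‖ * S.nsq θ₀ u := by rw [mul_assoc, S.nrm_mul_self hθ₀]
  refine S.eq_zero_of_nsq_nonpos hθ₀ ?_
  nlinarith [hgap u huW, S.nsq_nonneg hθ₀ u]

theorem eq_add_of_mem_V {θ₀ : EuclideanSpace ℝ (Fin n)} (hθ₀ : θ₀ ∈ S.Θ) (hθ : θ ∈ S.Θ)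
    {ν La : ℝ} (hgap : ∀ w ∈ S.W θ₀, ν * S.nsq θ₀ w ≤ (S.a θ₀ w w).re)
    (hLa : ∀ u, ‖S.a θ₀ u u - S.a θ u u‖ ≤ La * ‖θ₀ - θ‖ * S.nrm θ₀ u * S.nrm θ₀ u)
    (hsmall : La * ‖θ₀ - θ‖ < ν) {v p q : H} (hv : v ∈ S.V θ)
    (hp : ∀ v' ∈ S.V θ₀, S.ip θ₀ (v - p) v' = 0)
    (hq : q ∈ S.W θ₀) (hpq : ∀ w ∈ S.W θ₀, S.a θ q w = - S.a θ p w) : v = p + q := by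
  have huW : v - p - q ∈ S.W θ₀ := fun v' hv' => by
    rw [← ipForm_apply _ hθ₀, map_sub, LinearMap.sub_apply, ipForm_apply, ipForm_apply,
      hp v' hv', hq v' hv', sub_zero]
  have hu : S.a θ (v - p - q) (v - p - q) = 0 := by
    rw [← aForm_apply _ hθ, map_sub (S.aForm hθ), map_sub (S.aForm hθ), LinearMap.sub_apply,
      LinearMap.sub_apply]
    simp only [aForm_apply, S.a_apply_eq_zero_of_mem_V hθ hv, hpq _ huW]
    ring
  rw [← sub_eq_zero, ← sub_sub]
  exact S.eq_zero_of_mem_W_of_a_self_eq_zero hθ₀ hgap hLa hsmall huW hu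

end FormFamily

theorem statement5_general
    {n : ℕ} {H : Type*} [NormedAddCommGroup H] [InnerProductSpace ℂ H]
    [CompleteSpace H] (S : FormFamily n H)
    (La : ℝ) (hLa0 : 0 < La)
    (hLa : ∀ θ₁ ∈ S.Θ, ∀ θ₂ ∈ S.Θ, ∀ u w : H,
      ‖S.a θ₁ u w - S.a θ₂ u w‖ ≤ La * ‖θ₁ - θ₂‖ * S.nrm θ₁ u * S.nrm θ₁ w)
    (h0 : (0 : EuclideanSpace ℝ (Fin n)) ∈ S.Θ)
    (ν₀ : ℝ) (hν₀ : 0 < ν₀)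
    (hgap0 : ∀ w ∈ S.W 0, ν₀ * S.nsq 0 w ≤ (S.a 0 w w).re)
    (Ncal : EuclideanSpace ℝ (Fin n) → H → H)
    (hNcal : ∀ θ ∈ S.Θ, ‖θ‖ ≤ ν₀ / (2 * La) → ∀ v ∈ S.V 0,
      Ncal θ v ∈ S.W 0 ∧ ∀ w ∈ S.W 0, S.a θ (Ncal θ v) w = - S.a θ v w)
 :
    ∀ θ ∈ S.Θ, ‖θ‖ ≤ ν₀ / (2 * La) →
      S.V θ ⊆ (fun v => v + Ncal θ v) '' S.V 0 ∧
        ∀ vθ ∈ S.V θ, ∀ p : H, p ∈ S.V 0 →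
          (∀ v' ∈ S.V 0, S.ip 0 (vθ - p) v' = 0) → vθ = p + Ncal θ p := by
  intro θ hθ hθν
  have hsmall : La * ‖0 - θ‖ < ν₀ := by
    rw [zero_sub, norm_neg]
    calc La * ‖θ‖ ≤ La * (ν₀ / (2 * La)) := mul_le_mul_of_nonneg_left hθν hLa0.le
      _ < ν₀ := by field_simp; linarith
  have hcorr : ∀ vθ ∈ S.V θ, ∀ p : H, p ∈ S.V 0 →
      (∀ v' ∈ S.V 0, S.ip 0 (vθ - p) v' = 0) → vθ = p + Ncal θ p := fun vθ hvθ p hp horth =>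
    have ⟨hNW, hNeq⟩ := hNcal θ hθ hθν p hp
    S.eq_add_of_mem_V h0 hθ hgap0 (fun u => hLa 0 h0 θ hθ u u) hsmall hvθ horth hNW hNeq
  refine ⟨fun vθ hvθ => ?_, hcorr⟩
  obtain ⟨p, hp, horth⟩ := S.exists_ip_sub_eq_zero h0 vθ
  exact ⟨p, hp, (hcorr vθ hvθ p hp horth).symm⟩

theorem statement5
    {n : ℕ} (hn : 0 < n) {H : Type*} [NormedAddCommGroup H] [InnerProductSpace ℂ H]
    [CompleteSpace H] (S : FormFamily n H)
    (K : ℝ) (hK0 : 0 < K)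
    (hK : ∀ θ₁ ∈ S.Θ, ∀ θ₂ ∈ S.Θ, ∀ u : H, S.nrm θ₁ u ≤ K * S.nrm θ₂ u)
    (La : ℝ) (hLa0 : 0 < La)
    (hLa : ∀ θ₁ ∈ S.Θ, ∀ θ₂ ∈ S.Θ, ∀ u w : H,
      ‖S.a θ₁ u w - S.a θ₂ u w‖ ≤ La * ‖θ₁ - θ₂‖ * S.nrm θ₁ u * S.nrm θ₁ w)
    (h0 : (0 : EuclideanSpace ℝ (Fin n)) ∈ S.Θ)
    (ν₀ : ℝ) (hν₀ : 0 < ν₀)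
    (hgap0 : ∀ w ∈ S.W 0, ν₀ * S.nsq 0 w ≤ (S.a 0 w w).re)
    (Ncal : EuclideanSpace ℝ (Fin n) → H → H)
    (hNcal : ∀ θ ∈ S.Θ, ‖θ‖ ≤ ν₀ / (2 * La) → ∀ v ∈ S.V 0,
      Ncal θ v ∈ S.W 0 ∧ ∀ w ∈ S.W 0, S.a θ (Ncal θ v) w = - S.a θ v w)
 :
    ∀ θ ∈ S.Θ, ‖θ‖ ≤ ν₀ / (2 * La) →
      S.V θ ⊆ (fun v => v + Ncal θ v) '' S.V 0 ∧
        ∀ vθ ∈ S.V θ, ∀ p : H, p ∈ S.V 0 →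
          (∀ v' ∈ S.V 0, S.ip 0 (vθ - p) v' = 0) → vθ = p + Ncal θ p :=
  statement5_general S La hLa0 hLa h0 ν₀ hν₀ hgap0 Ncal hNcal
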